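/- arXiv:1406.6015 — 3 statements merged into one kernel-verified Lean document; each statement's English description precedes it below -/
import Mathlib

section
/- For n odd, let v and v' be distinct binary vertices of Q(C(n,2)). Then the joint saturation graph G(v,v') contains no cycles; equivalently, for i and j in the same component, exactly one of the cyclic sequences i, i+1, …, j or j, j+1, …, i is a path of G(v,v'). -/
open Finset

/-- Support of a vector. -/
def supp {n : ℕ} (x : Fin n → ℝ) : Set (Fin n) := {j | x j ≠ 0}

/-- Support of the `t`-th row of a matrix. -/
def rowSupp {m n : ℕ} (A : Matrix (Fin m) (Fin n) ℝ) (t : Fin m) : Set (Fin n) :=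
  {j | A t j ≠ 0}

def IsBinaryMatrix {m n : ℕ} (A : Matrix (Fin m) (Fin n) ℝ) : Prop :=
  ∀ t j, A t j = 0 ∨ A t j = 1

def IsBinaryVec {n : ℕ} (x : Fin n → ℝ) : Prop := ∀ j, x j = 0 ∨ x j = 1

/-- The polyhedron `{x | A x ≥ b, x ≥ 0}`. -/
def polyP {m n : ℕ} (A : Matrix (Fin m) (Fin n) ℝ) (b : Fin m → ℝ) : Set (Fin n → ℝ) :=
  {x | (∀ i, b i ≤ ∑ j, A i j * x j) ∧ ∀ j, 0 ≤ x j}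

/-- The linear relaxation `Q(A) = {x | A x ≥ 1, x ≥ 0}`. -/
def polyQ {m n : ℕ} (A : Matrix (Fin m) (Fin n) ℝ) : Set (Fin n → ℝ) :=
  {x | (∀ i, 1 ≤ ∑ j, A i j * x j) ∧ ∀ j, 0 ≤ x j}

/-- The set covering polyhedron `Q*(A)`: convex hull of nonnegative integer solutions of
`A x ≥ 1`. -/
def Qstar {m n : ℕ} (A : Matrix (Fin m) (Fin n) ℝ) : Set (Fin n → ℝ) :=
  convexHull ℝ {x | (∀ j, ∃ k : ℕ, x j = k) ∧ ∀ i, 1 ≤ ∑ j, A i j * x j}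

/-- A vertex of a convex set is an extreme point. -/
def IsVertex {n : ℕ} (S : Set (Fin n → ℝ)) (v : Fin n → ℝ) : Prop :=
  v ∈ S.extremePoints ℝ

/-- Two distinct vertices are adjacent when they lie on a common edge, i.e. the segment
joining them is a face (extreme subset) of `S`. -/
def AdjacentVerts {n : ℕ} (S : Set (Fin n → ℝ)) (v w : Fin n → ℝ) : Prop :=
  v ≠ w ∧ IsVertex S v ∧ IsVertex S w ∧ IsExtreme ℝ S (segment ℝ v w)

/-- There is a row support `C` with `C ∩ supp v = {p}` and `C ∩ supp v' = {p'}`. -/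
def jsgEdge {m n : ℕ} (A : Matrix (Fin m) (Fin n) ℝ) (v v' : Fin n → ℝ)
    (p p' : Fin n) : Prop :=
  ∃ t, rowSupp A t ∩ supp v = {p} ∧ rowSupp A t ∩ supp v' = {p'}

/-- The joint saturation graph of `v` and `v'` with respect to `A`. -/
def JSG {m n : ℕ} (A : Matrix (Fin m) (Fin n) ℝ) (v v' : Fin n → ℝ) :
    SimpleGraph (Fin n) where
  Adj p p' := p ≠ p' ∧ (jsgEdge A v v' p p' ∨ jsgEdge A v v' p' p)
  symm := by constructor; intro p p' h; exact ⟨h.1.symm, h.2.symm⟩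
  loopless := by constructor; intro p h; exact h.1 rfl

/-- The node set of the joint saturation graph: the symmetric difference of the supports. -/
def jsgNodes {n : ℕ} (v v' : Fin n → ℝ) : Set (Fin n) :=
  (supp v \ supp v') ∪ (supp v' \ supp v)

def JSGConnected {m n : ℕ} (A : Matrix (Fin m) (Fin n) ℝ) (v v' : Fin n → ℝ) : Prop :=
  ∀ p ∈ jsgNodes v v', ∀ q ∈ jsgNodes v v', (JSG A v v').Reachable p q

/-- One of the two partite sets is contained in a single connected component. -/
def JSGPartiteConnected {m n : ℕ} (A : Matrix (Fin m) (Fin n) ℝ) (v v' : Fin n → ℝ) : Prop :=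
  (∀ p ∈ supp v \ supp v', ∀ q ∈ supp v \ supp v', (JSG A v v').Reachable p q) ∨
  (∀ p ∈ supp v' \ supp v, ∀ q ∈ supp v' \ supp v, (JSG A v v').Reachable p q)

/-- Exactly two components, one of which is an isolated node. -/
def JSGAlmostConnected {m n : ℕ} (A : Matrix (Fin m) (Fin n) ℝ) (v v' : Fin n → ℝ) : Prop :=
  ∃ q ∈ jsgNodes v v', (∀ p, ¬ (JSG A v v').Adj q p) ∧ (jsgNodes v v' \ {q}).Nonempty ∧
    ∀ p ∈ jsgNodes v v' \ {q}, ∀ r ∈ jsgNodes v v' \ {q}, (JSG A v v').Reachable p r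

/-- The (directed) circular arc from `i` to `j` in `Fin n`. -/
def arc {n : ℕ} [NeZero n] (i j : Fin n) : Set (Fin n) :=
  {k | ∃ h : ℕ, h ≤ ((j - i : Fin n) : ℕ) ∧ k = i + (Fin.ofNat n h)}

/-- A matrix is row circular if each row support is a circular arc. -/
def RowCircular {m n : ℕ} [NeZero n] (A : Matrix (Fin m) (Fin n) ℝ) : Prop :=
  ∀ t, ∃ i j : Fin n, rowSupp A t = arc i j

/-- The standard assumptions: binary, no dominating rows, between 2 and n-1 ones per row,
no all-zero or all-one column. -/
def StandardAssumptions {m n : ℕ} (A : Matrix (Fin m) (Fin n) ℝ) : Prop :=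
  IsBinaryMatrix A ∧
  (∀ s t : Fin m, s ≠ t → ¬ rowSupp A s ⊆ rowSupp A t) ∧
  (∀ t, 2 ≤ (rowSupp A t).ncard ∧ (rowSupp A t).ncard ≤ n - 1) ∧
  (∀ j : Fin n, (∃ t, A t j ≠ 0) ∧ (∃ t, A t j = 0))

/-- `a` and `b` occur consecutively (in either order) in the list `l`. -/
def ListConsec {α : Type*} (l : List α) (a b : α) : Prop :=
  ∃ k : ℕ, (l[k]? = some a ∧ l[k+1]? = some b) ∨ (l[k]? = some b ∧ l[k+1]? = some a)

/-- `a` and `b` occur cyclically consecutively (in either order) in the list `l`. -/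
def CycConsec {α : Type*} (l : List α) (a b : α) : Prop :=
  ∃ k : ℕ, k < l.length ∧
    ((l[k]? = some a ∧ l[(k+1) % l.length]? = some b) ∨
     (l[k]? = some b ∧ l[(k+1) % l.length]? = some a))

/-- The set `S` induces a path (possibly a single node) in `G`. -/
def IsPathOn {n : ℕ} (G : SimpleGraph (Fin n)) (S : Set (Fin n)) : Prop :=
  ∃ l : List (Fin n), l.Nodup ∧ (∀ x, x ∈ S ↔ x ∈ l) ∧
    (∀ a b, a ∈ S → G.Adj a b → ListConsec l a b) ∧
    (∀ a b, ListConsec l a b → G.Adj a b)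

/-- The set `S` induces a cycle in `G`. -/
def IsCycleOn {n : ℕ} (G : SimpleGraph (Fin n)) (S : Set (Fin n)) : Prop :=
  ∃ l : List (Fin n), 3 ≤ l.length ∧ l.Nodup ∧ (∀ x, x ∈ S ↔ x ∈ l) ∧
    (∀ a b, a ∈ S → G.Adj a b → CycConsec l a b) ∧
    (∀ a b, CycConsec l a b → G.Adj a b)

/-- `p` and `q` are cyclically consecutive elements of `S`. -/
def CyclConsecIn {n : ℕ} [NeZero n] (S : Set (Fin n)) (p q : Fin n) : Prop :=
  p ≠ q ∧ p ∈ S ∧ q ∈ S ∧ (arc p q ∩ S = {p, q} ∨ arc q p ∩ S = {p, q})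

/-- The circulant matrix `C(n,2)` with row supports `{t, t+1}` (mod n). -/
def Cn2 (n : ℕ) [NeZero n] : Matrix (Fin n) (Fin n) ℝ :=
  fun t j => if j = t ∨ j = t + 1 then 1 else 0

/-- Append a row to a matrix. -/
def appendRow {m n : ℕ} (A : Matrix (Fin m) (Fin n) ℝ) (a : Fin n → ℝ) :
    Matrix (Fin (m+1)) (Fin n) ℝ :=
  fun t j => if h : (t : ℕ) < m then A ⟨t, h⟩ j else a j

/-- A set of points is integral if all its extreme points are integer vectors. -/
def IsIntegralSet {n : ℕ} (S : Set (Fin n → ℝ)) : Prop :=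
  ∀ x ∈ S.extremePoints ℝ, ∀ j, ∃ z : ℤ, x j = z

/-- A binary matrix is minimally nonideal if `Q(A)` is not integral but both restrictions
`Q(A) ∩ {x_i = 0}` and `Q(A) ∩ {x_i = 1}` are integral for every coordinate `i`. -/
def MinimallyNonideal {m n : ℕ} (A : Matrix (Fin m) (Fin n) ℝ) : Prop :=
  ¬ IsIntegralSet (polyQ A) ∧
  ∀ i : Fin n, IsIntegralSet (polyQ A ∩ {x | x i = 0}) ∧
               IsIntegralSet (polyQ A ∩ {x | x i = 1})

/-- The matrix of the degenerate projective plane with `t+1` points and lines. -/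
def Jmat (t : ℕ) : Matrix (Fin (t+1)) (Fin (t+1)) ℝ :=
  fun i j => if i = 0 then (if j = 0 then 0 else 1) else (if j = 0 ∨ j = i then 1 else 0)

/-- `A` is isomorphic to some degenerate projective plane matrix `J_t`, `t ≥ 2`. -/
def IsoToDegenProjPlane {m n : ℕ} (A : Matrix (Fin m) (Fin n) ℝ) : Prop :=
  ∃ t : ℕ, 2 ≤ t ∧ ∃ (σ : Fin m ≃ Fin (t+1)) (τ : Fin n ≃ Fin (t+1)),
    ∀ i j, A i j = Jmat t (σ i) (τ j)

/-- `A₁` is the core of `A`: a square nonsingular row submatrix with `r` ones per row and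
per column, all other rows of `A` having more than `r` ones. -/
def IsCore {m n : ℕ} (A : Matrix (Fin m) (Fin n) ℝ) (A₁ : Matrix (Fin n) (Fin n) ℝ)
    (r : ℕ) : Prop :=
  2 ≤ r ∧ A₁.det ≠ 0 ∧
  (∃ f : Fin n → Fin m, Function.Injective f ∧ (∀ i, A₁ i = A (f i)) ∧
    ∀ t, t ∉ Set.range f → r < (rowSupp A t).ncard) ∧
  (∀ i, (rowSupp A₁ i).ncard = r) ∧ (∀ j, {i | A₁ i j ≠ 0}.ncard = r)

/-- `B₁` is the core of the blocker of `A`: a square nonsingular matrix whose rows are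
binary vertices of `Q*(A)` with `s` ones per row and per column, all other binary
vertices of `Q*(A)` having more than `s` ones. -/
def IsBlockerCore {m n : ℕ} (A : Matrix (Fin m) (Fin n) ℝ) (B₁ : Matrix (Fin n) (Fin n) ℝ)
    (s : ℕ) : Prop :=
  2 ≤ s ∧ B₁.det ≠ 0 ∧
  (∀ i, IsBinaryVec (B₁ i) ∧ IsVertex (Qstar A) (B₁ i)) ∧
  Function.Injective (fun i => B₁ i) ∧
  (∀ i, (rowSupp B₁ i).ncard = s) ∧ (∀ j, {i | B₁ i j ≠ 0}.ncard = s) ∧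
  (∀ x, IsBinaryVec x → IsVertex (Qstar A) x → (∀ i, x ≠ B₁ i) → s < (supp x).ncard)

/-- `w^i` for `n = 3ν`: the complement of the characteristic vector of the residue class
`i` mod 3. -/
def wVec (n : ℕ) (i : Fin 3) : Fin n → ℝ :=
  fun k => if (k : ℕ) % 3 = (i : ℕ) then 0 else 1

/-- `a^i` for `n = 3ν`: the characteristic vector of the residue class `i` mod 3
(`a¹ = (1,0,0,1,0,0,…)` corresponds to `i = 0`). -/
def aVec (n : ℕ) (i : ℕ) : Fin n → ℝ :=
  fun k => if (k : ℕ) % 3 = i then 1 else 0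

/-!
Every edge of `G(v,v')` joins `p` to `p ± 1`, and every edge has exactly one end in `supp v`,
so the graph is bipartite. A cycle in a graph on `ℤ/n` with steps `±1` cannot turn back
(two opposite steps in a row would revisit a vertex), so it winds around the circle: its length
is a positive multiple of `n` and at most `n`, hence equal to `n`. For odd `n` this contradicts
bipartiteness.
-/

namespace SimpleGraph.Walk

variable {V : Type*} [AddCommGroup V] {G : SimpleGraph V} {a u : V} {c : G.Walk u u}

theorem IsCycle.getVert_succ_sub_getVert (hG : ∀ p q, G.Adj p q → q - p = a ∨ q - p = -a)
    (hc : c.IsCycle) : ∀ k < c.length, c.getVert (k + 1) - c.getVert k = c.snd - u := by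
  intro k hk
  induction k with
  | zero => simp [snd]
  | succ k ih =>
    have hprev := ih (by omega)
    have hturn : c.getVert k ≠ c.getVert (k + 2) :=
      hc.getVert_sub_one_ne_getVert_add_one (i := k + 1) (by omega)
    have hstep := hG _ _ (c.adj_getVert_succ hk)
    have hstep₀ := hG _ _ (c.adj_getVert_succ (i := k) (by omega))
    rw [hprev] at hstep₀
    obtain h | h : c.getVert (k + 2) - c.getVert (k + 1) = c.snd - u ∨
        c.getVert (k + 2) - c.getVert (k + 1) = -(c.snd - u) := by
      rcases hstep₀ with h₀ | h₀ <;> rcases hstep with h₁ | h₁ <;> simp [h₀, h₁]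
    · exact h
    · refine absurd (sub_eq_zero.mp ?_).symm hturn
      rw [← sub_add_sub_cancel _ (c.getVert (k + 1)), h, hprev, neg_add_cancel]

theorem IsCycle.getVert_eq_add_nsmul (hG : ∀ p q, G.Adj p q → q - p = a ∨ q - p = -a)
    (hc : c.IsCycle) : ∀ k ≤ c.length, c.getVert k = u + k • (c.snd - u) := by
  intro k hk
  induction k with
  | zero => simp
  | succ k ih =>
    rw [← sub_add_cancel (c.getVert (k + 1)) (c.getVert k),
      hc.getVert_succ_sub_getVert hG k hk, ih (by omega), succ_nsmul]
    abel

theorem IsCycle.addOrderOf_dvd_length (hG : ∀ p q, G.Adj p q → q - p = a ∨ q - p = -a)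
    (hc : c.IsCycle) : addOrderOf a ∣ c.length := by
  have hclosed : c.length • (c.snd - u) = 0 := by
    have := hc.getVert_eq_add_nsmul hG c.length le_rfl
    rwa [getVert_length, left_eq_add] at this
  have hfirst := hG _ _ (c.adj_getVert_succ (i := 0) (by have := hc.three_le_length; omega))
  rw [getVert_zero, ← snd] at hfirst
  rcases hfirst with h | h <;>
    simpa [h, addOrderOf_neg] using addOrderOf_dvd_iff_nsmul_eq_zero.mpr hclosed

end SimpleGraph.Walk

open Fin.CommRing in
theorem Fin.addOrderOf_one (n : ℕ) [NeZero n] : addOrderOf (1 : Fin n) = n :=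
  CharP.eq (Fin n) (CharP.addOrderOf_one (Fin n)) inferInstance

theorem SimpleGraph.isAcyclic_of_adj_sub_of_isBipartite {n : ℕ} [NeZero n] (hodd : Odd n)
    {G : SimpleGraph (Fin n)} (hG : ∀ p q, G.Adj p q → q - p = 1 ∨ q - p = -1)
    (hbip : G.IsBipartite) : G.IsAcyclic := by
  intro u c hc
  have hdvd : n ∣ c.length := by simpa [Fin.addOrderOf_one] using hc.addOrderOf_dvd_length hG
  have hle : c.length ≤ n := by
    have := hc.isPath_tail.length_lt
    rw [Fintype.card_fin] at this
    have := Walk.length_tail_add_one hc.not_nil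
    omega
  have hpos : 0 < c.length := by have := hc.three_le_length; omega
  have hlen : c.length = n := le_antisymm hle (Nat.le_of_dvd hpos hdvd)
  exact Nat.not_even_iff_odd.mpr hodd (hlen ▸ two_colorable_iff_forall_loop_even.mp hbip u c)

section JointSaturationGraph

variable {m n : ℕ} {A : Matrix (Fin m) (Fin n) ℝ} {v v' : Fin n → ℝ} {p q : Fin n}

theorem jsgEdge.exists_mem_rowSupp (h : jsgEdge A v v' p q) :
    ∃ t, p ∈ rowSupp A t ∧ q ∈ rowSupp A t := by
  obtain ⟨t, hv, hv'⟩ := h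
  have hp : p ∈ rowSupp A t ∩ supp v := hv ▸ rfl
  have hq : q ∈ rowSupp A t ∩ supp v' := hv' ▸ rfl
  exact ⟨t, hp.1, hq.1⟩

theorem jsgEdge.mem_supp_and_notMem_supp (h : jsgEdge A v v' p q) (hpq : p ≠ q) :
    p ∈ supp v ∧ q ∉ supp v := by
  obtain ⟨t, hv, hv'⟩ := h
  have hp : p ∈ rowSupp A t ∩ supp v := hv ▸ rfl
  have hq : q ∈ rowSupp A t ∩ supp v' := hv' ▸ rfl
  refine ⟨hp.2, fun hqv => hpq ?_⟩
  have : q ∈ rowSupp A t ∩ supp v := ⟨hq.1, hqv⟩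
  rw [hv] at this
  exact this.symm

theorem jsg_adj_exists_mem_rowSupp (h : (JSG A v v').Adj p q) :
    ∃ t, p ∈ rowSupp A t ∧ q ∈ rowSupp A t := by
  rcases h.2 with h | h
  · exact h.exists_mem_rowSupp
  · exact (h.exists_mem_rowSupp).imp fun _ => And.symm

theorem jsg_adj_mem_supp_iff (h : (JSG A v v').Adj p q) : p ∈ supp v ↔ q ∉ supp v := by
  rcases h.2 with h' | h'
  · have := h'.mem_supp_and_notMem_supp h.1
    tauto
  · have := h'.mem_supp_and_notMem_supp h.1.symm
    tauto

theorem isBipartite_jsg (A : Matrix (Fin m) (Fin n) ℝ) (v v' : Fin n → ℝ) :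
    (JSG A v v').IsBipartite := by
  classical
  refine ⟨SimpleGraph.Coloring.mk (fun p => if p ∈ supp v then 0 else 1) fun {p q} h => ?_⟩
  have := jsg_adj_mem_supp_iff h
  by_cases hp : p ∈ supp v <;> simp_all

end JointSaturationGraph

theorem rowSupp_cn2 {n : ℕ} [NeZero n] (t : Fin n) : rowSupp (Cn2 n) t = {t, t + 1} := by
  ext j
  simp only [rowSupp, Cn2, Set.mem_ofPred_eq, Set.mem_insert_iff, Set.mem_singleton_iff]
  split_ifs with hj <;> simp [hj]

theorem jsg_cn2_adj_sub {n : ℕ} [NeZero n] {v v' : Fin n → ℝ} {p q : Fin n}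
    (h : (JSG (Cn2 n) v v').Adj p q) : q - p = 1 ∨ q - p = -1 := by
  obtain ⟨t, hp, hq⟩ := jsg_adj_exists_mem_rowSupp h
  rw [rowSupp_cn2] at hp hq
  rcases hp with rfl | rfl <;> rcases hq with rfl | rfl
  · exact absurd rfl h.ne
  · simp
  · simp
  · exact absurd rfl h.ne

theorem stmt14_general {n : ℕ} [NeZero n] (hodd : Odd n)
    (v v' : Fin n → ℝ) :
    (JSG (Cn2 n) v v').IsAcyclic :=
  SimpleGraph.isAcyclic_of_adj_sub_of_isBipartite hodd (fun _ _ => jsg_cn2_adj_sub)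
    (isBipartite_jsg _ _ _)

/-- for `n` odd, the joint saturation graph of two distinct binary
vertices of `Q(C(n,2))` contains no cycles. -/
theorem stmt14 {n : ℕ} [NeZero n] (hodd : Odd n)
    (v v' : Fin n → ℝ) (hne : v ≠ v')
    (hbv : IsBinaryVec v) (hbv' : IsBinaryVec v')
    (hv : IsVertex (polyQ (Cn2 n)) v) (hv' : IsVertex (polyQ (Cn2 n)) v') :
    (JSG (Cn2 n) v v').IsAcyclic :=
  stmt14_general hodd v v'
end

section
/- Let n ≥ 9 be odd and let i < j < l in {1,…,n} with j − i ≥ 3 odd, l − j ≥ 3 odd, and (i,l) ≠ (1,n). If v and v' are distinct binary vertices of Q(C(n,2)) with v'_i = v'_j = v'_l = 0, then every connected component of the joint saturation graph G(v,v') contains at most one element of {i,j,l}. -/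
open Finset

/-!
An edge of `G(v, v')` for `C(n,2)` joins two cyclic neighbours `p`, `p + 1`, exactly one of
which lies in `supp v'`. So along an arc of odd length whose two ends are zeros of `v'`, the
zero pattern of `v'` cannot alternate all the way: some consecutive pair on the arc is not an
edge, a cut. The arcs from `i` to `j`, from `j` to `l` and from `l` back to `i` all have odd
length (the last one because `n` is odd), so each contains a cut, and any two of `i, j, l` are
separated by two cuts.
-/

open scoped Fin.NatCast

lemma SimpleGraph.Reachable.mem_of_adj_closed {V : Type*} {G : SimpleGraph V} {S : Set V}
    (hS : ∀ x y, G.Adj x y → x ∈ S → y ∈ S) {x y : V} (h : G.Reachable x y)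
    (hx : x ∈ S) : y ∈ S := by
  obtain ⟨w⟩ := h
  induction w with
  | nil => exact hx
  | cons hadj _ ih => exact ih (hS _ _ hadj hx)

section Cn2

variable {n : ℕ} [NeZero n] {v v' : Fin n → ℝ}

lemma rowSupp_Cn2 (t : Fin n) : rowSupp (Cn2 n) t = {t, t + 1} := by
  ext x
  simp only [rowSupp, Cn2, Set.mem_ofPred_eq, Set.mem_insert_iff, Set.mem_singleton_iff]
  split_ifs with h <;> simpa using h

lemma jsgEdge_Cn2 {p q : Fin n} (hpq : p ≠ q)
    (h : jsgEdge (Cn2 n) v v' p q) : (q = p + 1 ∨ p = q + 1) ∧ v' p = 0 ∧ v' q ≠ 0 := by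
  obtain ⟨t, hv, hv'⟩ := h
  have hp : p ∈ rowSupp (Cn2 n) t := (hv.ge rfl).1
  have hq : q ∈ rowSupp (Cn2 n) t ∩ supp v' := hv'.ge rfl
  have hp' : v' p = 0 := by
    by_contra hp'
    exact hpq (hv'.le ⟨hp, hp'⟩)
  rw [rowSupp_Cn2] at hp hq
  refine ⟨?_, hp', hq.2⟩
  rcases hp with rfl | rfl <;> rcases hq.1 with rfl | rfl <;> tauto

lemma JSG_Cn2_adj {p q : Fin n}
    (h : (JSG (Cn2 n) v v').Adj p q) : (q = p + 1 ∨ p = q + 1) ∧ (v' p = 0 ↔ v' q ≠ 0) := by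
  obtain ⟨hpq, hE | hE⟩ := h
  · obtain ⟨hnb, hp, hq⟩ := jsgEdge_Cn2 hpq hE
    exact ⟨hnb, iff_of_true hp hq⟩
  · obtain ⟨hnb, hq, hp⟩ := jsgEdge_Cn2 hpq.symm hE
    exact ⟨hnb.symm, iff_of_false hp (not_not_intro hq)⟩

lemma JSG_Cn2_exists_not_adj_succ_of_odd {s t : Fin n}
    (hst : Odd (t - s).val) (hs : v' s = 0) (ht : v' t = 0) :
    ∃ a, (a - s).val < (t - s).val ∧ ¬ (JSG (Cn2 n) v v').Adj a (a + 1) := by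
  by_contra! hadj
  have parity : ∀ k ≤ (t - s).val, (v' (s + k) = 0 ↔ Even k) := by
    intro k hk
    induction k with
    | zero => simpa using hs
    | succ k ih =>
      have hkn : k < n := by have := (t - s).isLt; omega
      have hflip := (JSG_Cn2_adj (hadj (s + k) (by simpa [Nat.mod_eq_of_lt hkn] using hk))).2
      rw [Nat.cast_succ, ← add_assoc, Nat.even_add_one, ← ih (by omega)]
      tauto
  have := (parity _ le_rfl).mp (by simpa using ht)
  exact Nat.not_even_iff_odd.mpr hst this

lemma JSG_Cn2_mem_Ioc_of_adj {a b : Fin n}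
    (ha : ¬ (JSG (Cn2 n) v v').Adj a (a + 1)) (hb : ¬ (JSG (Cn2 n) v v').Adj b (b + 1))
    {x y : Fin n} (hxy : (JSG (Cn2 n) v v').Adj x y) (hx : x ∈ Set.Ioc a b) :
    y ∈ Set.Ioc a b := by
  have hone : n = 1 ∨ (1 : Fin n).val = 1 := by
    rw [Fin.val_one', Nat.one_mod_eq_one]; tauto
  rcases (JSG_Cn2_adj hxy).1 with rfl | rfl
  · have : x ≠ b := by rintro rfl; exact hb hxy
    simp only [Set.mem_Ioc] at hx ⊢
    fin_omega
  · have : y ≠ a := by rintro rfl; exact ha hxy.symm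
    simp only [Set.mem_Ioc] at hx ⊢
    fin_omega

lemma JSG_Cn2_not_reachable_of_not_adj_succ {a b p q : Fin n}
    (ha : ¬ (JSG (Cn2 n) v v').Adj a (a + 1)) (hb : ¬ (JSG (Cn2 n) v v').Adj b (b + 1))
    (hpa : p ≤ a) (haq : a < q) (hbpq : q ≤ b ∨ b < p) :
    ¬ (JSG (Cn2 n) v v').Reachable p q := by
  intro hpq
  rcases hbpq with hqb | hbp
  · have := hpq.symm.mem_of_adj_closed (fun _ _ => JSG_Cn2_mem_Ioc_of_adj ha hb) ⟨haq, hqb⟩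
    exact not_lt_of_ge hpa this.1
  · have := hpq.mem_of_adj_closed (fun _ _ => JSG_Cn2_mem_Ioc_of_adj hb ha) ⟨hbp, hpa⟩
    exact not_le_of_gt haq this.2

end Cn2

theorem stmt15_general {n : ℕ} [NeZero n] (hodd : Odd n)
    (i j l : Fin n) (hij : (i : ℕ) < j) (hjl : (j : ℕ) < l)
    (hoij : Odd ((j : ℕ) - i)) (hojl : Odd ((l : ℕ) - j))
    (v v' : Fin n → ℝ) (h0 : v' i = 0 ∧ v' j = 0 ∧ v' l = 0) :
    ¬ (JSG (Cn2 n) v v').Reachable i j ∧ ¬ (JSG (Cn2 n) v v').Reachable j l ∧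
      ¬ (JSG (Cn2 n) v v').Reachable i l := by
  obtain ⟨hi, hj, hl⟩ := h0
  have hoji : Odd (j - i).val := by rwa [Fin.sub_val_of_le hij.le]
  have holj : Odd (l - j).val := by rwa [Fin.sub_val_of_le hjl.le]
  have hoil : Odd (i - l).val := by
    rw [Fin.coe_sub_iff_lt.mpr (hij.trans hjl)]
    rw [Nat.odd_iff] at hodd hoij hojl ⊢
    omega
  obtain ⟨a₁, ha₁, cut₁⟩ := JSG_Cn2_exists_not_adj_succ_of_odd hoji hi hj
  obtain ⟨a₂, ha₂, cut₂⟩ := JSG_Cn2_exists_not_adj_succ_of_odd holj hj hl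
  obtain ⟨a₃, ha₃, cut₃⟩ := JSG_Cn2_exists_not_adj_succ_of_odd hoil hl hi
  have h₁ : i ≤ a₁ ∧ a₁ < j := by fin_omega
  have h₂ : j ≤ a₂ ∧ a₂ < l := by fin_omega
  have h₃ : l ≤ a₃ ∨ a₃ < i := by fin_omega
  have h₃' : l ≤ a₃ ∨ a₃ < j := h₃.imp_right (·.trans hij)
  exact ⟨JSG_Cn2_not_reachable_of_not_adj_succ cut₁ cut₂ h₁.1 h₁.2 (.inl h₂.1),
    JSG_Cn2_not_reachable_of_not_adj_succ cut₂ cut₃ h₂.1 h₂.2 h₃',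
    JSG_Cn2_not_reachable_of_not_adj_succ cut₁ cut₃ h₁.1 (h₁.2.trans hjl) h₃⟩

/-- every component of the joint saturation graph contains at most one of
the three positions `i, j, l` (1-based positions correspond to `0`-based `Fin n`
values; `(i,l) ≠ (1,n)` becomes `¬(i = 0 ∧ l = n-1)`). -/
theorem stmt15 {n : ℕ} [NeZero n] (hn : 9 ≤ n) (hodd : Odd n)
    (i j l : Fin n) (hij : (i : ℕ) < j) (hjl : (j : ℕ) < l)
    (h3ij : 3 ≤ (j : ℕ) - i) (hoij : Odd ((j : ℕ) - i))
    (h3jl : 3 ≤ (l : ℕ) - j) (hojl : Odd ((l : ℕ) - j))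
    (hend : ¬ ((i : ℕ) = 0 ∧ (l : ℕ) = n - 1))
    (v v' : Fin n → ℝ) (hne : v ≠ v')
    (hbv : IsBinaryVec v) (hbv' : IsBinaryVec v')
    (hv : IsVertex (polyQ (Cn2 n)) v) (hv' : IsVertex (polyQ (Cn2 n)) v')
    (h0 : v' i = 0 ∧ v' j = 0 ∧ v' l = 0) :
    ¬ (JSG (Cn2 n) v v').Reachable i j ∧ ¬ (JSG (Cn2 n) v v').Reachable j l ∧
      ¬ (JSG (Cn2 n) v v').Reachable i l :=
  stmt15_general hodd i j l hij hjl hoij hojl v v' h0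
end

section
/- Let A be a minimally nonideal binary matrix not isomorphic to any degenerate projective plane matrix J_t, with core A₁ having r ones per row and blocker core B₁ having s ones per row. If v and v' are binary vertices of Q(A) with v·1 = v'·1 = s, then v and v' are adjacent in Q*(A); moreover, they are adjacent in Q(A) if and only if supp(v) ∪ supp(v') ≠ {1,…,n}. -/
open Finset

/-!
Since `v` is an integer point of `Q(A)` with `s` ones, it is a row of `B₁`: every integer cover
dominates a minimal cover, which is a vertex of `Q*(A)` and hence has at least `s` ones, with
equality only at the rows of `B₁`. So `x · 1 ≥ s` on `Q*(A)`, and the face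
`Q*(A) ∩ {x · 1 = s}` lies in the simplex spanned by the linearly independent rows of `B₁`, in
which any two vertices span an edge; thus `v` and `v'` are adjacent in `Q*(A)`. If a coordinate
`i` lies outside `supp v ∪ supp v'`, the same argument runs inside the integral face
`Q(A) ∩ {x_i = 0}`, whose vertices minimising `x · 1` are integer covers. If the supports cover
all coordinates, the midpoint of `v` and `v'` can be moved by `±1/2` in one coordinate without
leaving `Q(A)` but off the hyperplane `x · 1 = s`, so `[v, v']` is not a face of `Q(A)`.
-/

section ConvexFaces

open Set Finset

variable {E : Type*} [AddCommGroup E] [Module ℝ E]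

lemma isExtreme_inter_eq_of_forall_le {K : Set E} (ℓ : E →ₗ[ℝ] ℝ) {c : ℝ}
    (h : ∀ x ∈ K, c ≤ ℓ x) : IsExtreme ℝ K (K ∩ {x | ℓ x = c}) := by
  refine ⟨inter_subset_left, ?_⟩
  rintro x hx y hy z hz ⟨a, b, ha, hb, hab, hxyz⟩
  have hℓ : a * ℓ x + b * ℓ y = c := by
    rw [← hz.2, ← hxyz, map_add, map_smul, map_smul, smul_eq_mul, smul_eq_mul]
  have hx' := mul_nonneg ha.le (sub_nonneg.2 (h x hx))
  have hy' := mul_nonneg hb.le (sub_nonneg.2 (h y hy))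
  have hsum : a * (ℓ x - c) + b * (ℓ y - c) = 0 := by linear_combination hℓ - c * hab
  have : a * (ℓ x - c) = 0 := by linarith
  exact ⟨hx, sub_eq_zero.1 ((mul_eq_zero.1 this).resolve_left ha.ne')⟩

lemma convexHull_inter_eq_subset_of_forall_le {S : Set E} (ℓ : E →ₗ[ℝ] ℝ) {c : ℝ}
    (h : ∀ x ∈ S, c ≤ ℓ x) :
    convexHull ℝ S ∩ {x | ℓ x = c} ⊆ convexHull ℝ (S ∩ {x | ℓ x = c}) := by
  classical
  rintro x ⟨hx, hℓx⟩
  obtain ⟨ι, _, w, z, hw₀, hw₁, hz, rfl⟩ := mem_convexHull_iff_exists_fintype.1 hx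
  have hterm : ∀ i ∈ Finset.univ, 0 ≤ w i * (ℓ (z i) - c) :=
    fun i _ => mul_nonneg (hw₀ i) (sub_nonneg.2 (h _ (hz i)))
  have hsum : ∑ i, w i * (ℓ (z i) - c) = 0 := by
    simp only [Set.mem_ofPred_eq, map_sum, map_smul, smul_eq_mul] at hℓx
    simp only [mul_sub, sum_sub_distrib, ← sum_mul, hw₁, hℓx, one_mul, sub_self]
  have hactive : ∀ i ∈ Finset.univ.filter (w · ≠ 0), z i ∈ S ∩ {x | ℓ x = c} := by
    intro i hi
    have := (sum_eq_zero_iff_of_nonneg hterm).1 hsum i (mem_univ i)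
    exact ⟨hz i, by
      simpa [sub_eq_zero] using (mul_eq_zero.1 this).resolve_left (mem_filter.1 hi).2⟩
  rw [← sum_filter_of_ne (p := (w · ≠ 0)) fun i _ hi h0 => hi (by rw [h0, zero_smul])]
  exact (convex_convexHull ℝ _).sum_mem (fun i _ => hw₀ i) (by rw [sum_filter_ne_zero, hw₁])
    fun i hi => subset_convexHull ℝ _ (hactive i hi)

lemma IsExtreme.image_of_injective {F : Type*} [AddCommGroup F] [Module ℝ F] {K T : Set E}
    (h : IsExtreme ℝ K T) (φ : E →ₗ[ℝ] F) (hφ : Function.Injective φ) :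
    IsExtreme ℝ (φ '' K) (φ '' T) := by
  refine ⟨image_mono h.1, ?_⟩
  rintro _ ⟨x, hx, rfl⟩ _ ⟨y, hy, rfl⟩ _ ⟨z, hz, rfl⟩ hzxy
  rw [← φ.coe_toAffineMap, ← image_openSegment] at hzxy
  obtain ⟨z', hz', hzz'⟩ := hzxy
  rw [φ.coe_toAffineMap] at hzz'
  exact mem_image_of_mem φ (h.2 hx hy hz (hφ hzz' ▸ hz'))

lemma mem_segment_single_of_mem_stdSimplex {ι : Type*} [Fintype ι] [DecidableEq ι] {a b : ι}
    (hab : a ≠ b) {w : ι → ℝ} (hw : w ∈ stdSimplex ℝ ι) (h : ∀ k, k ≠ a → k ≠ b → w k = 0) :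
    w ∈ segment ℝ (Pi.single a 1) (Pi.single b 1) := by
  refine ⟨w a, w b, hw.1 a, hw.1 b, ?_, ?_⟩
  · rw [← hw.2, Fintype.sum_eq_add a b hab fun k hk => h k hk.1 hk.2]
  · funext k
    by_cases hka : k = a
    · subst hka; simp [Ne.symm hab]
    by_cases hkb : k = b
    · subst hkb; simp [hab]
    simp [hka, hkb, h k hka hkb]

lemma isExtreme_stdSimplex_segment_single {ι : Type*} [Fintype ι] [DecidableEq ι] {a b : ι}
    (hab : a ≠ b) : IsExtreme ℝ (stdSimplex ℝ ι) (segment ℝ (Pi.single a 1) (Pi.single b 1)) := by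
  refine ⟨segment_single_subset_stdSimplex ℝ a b, ?_⟩
  rintro x hx y hy z hz ⟨c, d, hc, hd, -, hxyz⟩
  refine mem_segment_single_of_mem_stdSimplex hab hx fun k hka hkb => ?_
  have hzk : z k = 0 := by
    obtain ⟨p, q, -, -, -, rfl⟩ := hz
    simp [hka, hkb]
  have hxk := hx.1 k
  have hyk := hy.1 k
  have : c * x k + d * y k = 0 := by simpa [hzk] using congrFun hxyz k
  nlinarith

lemma LinearIndependent.isExtreme_segment {ι : Type*} [Fintype ι] {p : ι → E}
    (hp : LinearIndependent ℝ p) {a b : ι} (hab : a ≠ b) :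
    IsExtreme ℝ (convexHull ℝ (range p)) (segment ℝ (p a) (p b)) := by
  classical
  set φ := Fintype.linearCombination ℝ p
  have hφ : Function.Injective φ := (injective_iff_map_eq_zero φ).2 fun g hg =>
    funext (Fintype.linearIndependent_iff.1 hp g (by rwa [Fintype.linearCombination_apply] at hg))
  have hsingle : ∀ i, φ (Pi.single i 1) = p i := by
    simp [φ, Fintype.linearCombination_apply_single]
  have hhull : convexHull ℝ (range p) = φ '' stdSimplex ℝ ι := by
    rw [← convexHull_rangle_single_eq_stdSimplex, LinearMap.image_convexHull, ← range_comp]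
    simp only [Function.comp_def, hsingle]
  have hseg : segment ℝ (p a) (p b) = φ '' segment ℝ (Pi.single a 1) (Pi.single b 1) := by
    rw [← φ.coe_toAffineMap, image_segment, φ.coe_toAffineMap, hsingle, hsingle]
  rw [hhull, hseg]
  exact (isExtreme_stdSimplex_segment_single hab).image_of_injective φ hφ

lemma isExtreme_segment_of_face_subset_convexHull {ι : Type*} [Fintype ι] {p : ι → E}
    (hp : LinearIndependent ℝ p) {K : Set E} (hK : Convex ℝ K) (ℓ : E →ₗ[ℝ] ℝ) {c : ℝ}
    (hge : ∀ x ∈ K, c ≤ ℓ x) (hface : K ∩ {x | ℓ x = c} ⊆ convexHull ℝ (range p))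
    {a b : ι} (hab : a ≠ b) (ha : p a ∈ K ∩ {x | ℓ x = c}) (hb : p b ∈ K ∩ {x | ℓ x = c}) :
    IsExtreme ℝ K (segment ℝ (p a) (p b)) :=
  (isExtreme_inter_eq_of_forall_le ℓ hge).trans <| (hp.isExtreme_segment hab).mono hface <|
    (hK.inter (convex_hyperplane ℓ.isLinear c)).segment_subset ha hb

lemma not_isExtreme_segment_of_add_sub_mem {K : Set E} (ℓ : E →ₗ[ℝ] ℝ) {v v' z d : E}
    (hvv' : ℓ v = ℓ v') (hz : z ∈ segment ℝ v v') (hd : ℓ d ≠ 0) (hadd : z + d ∈ K)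
    (hsub : z - d ∈ K) : ¬ IsExtreme ℝ K (segment ℝ v v') := by
  intro h
  have hconst : ∀ y ∈ segment ℝ v v', ℓ y = ℓ v := by
    rintro _ ⟨a, b, -, -, hab, rfl⟩
    rw [map_add, map_smul, map_smul, ← hvv', smul_eq_mul, smul_eq_mul, ← add_mul, hab, one_mul]
  have hmid : z ∈ openSegment ℝ (z + d) (z - d) :=
    ⟨1 / 2, 1 / 2, by norm_num, by norm_num, by norm_num, by module⟩
  have := hconst _ (h.2 hadd hsub hz hmid)
  rw [map_add, hconst z hz] at this
  exact hd (by linarith)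

lemma subset_convexHull_of_extremePoints_subset [TopologicalSpace E] [T2Space E]
    [IsTopologicalAddGroup E] [ContinuousSMul ℝ E] [LocallyConvexSpace ℝ E] {P T : Set E}
    (hP : IsCompact P) (hPc : Convex ℝ P) (hT : T.Finite) (h : P.extremePoints ℝ ⊆ T) :
    P ⊆ convexHull ℝ T :=
  calc P = closure (convexHull ℝ (P.extremePoints ℝ)) :=
        (closure_convexHull_extremePoints hP hPc).symm
    _ ⊆ closure (convexHull ℝ T) := closure_mono (convexHull_mono h)
    _ = convexHull ℝ T := (hT.isClosed_convexHull ℝ).closure_eq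

end ConvexFaces

section Orthant

open Set Finset

variable {ι : Type*}

lemma IsLeast.mem_extremePoints {K : Set (ι → ℝ)} {w : ι → ℝ} (h : IsLeast K w) :
    w ∈ K.extremePoints ℝ := by
  refine mem_extremePoints_iff_left.2 ⟨h.1, ?_⟩
  rintro x hx y hy ⟨a, b, ha, hb, hab, hxy⟩
  funext j
  have hj : a * x j + b * y j = w j := by simpa using congrFun hxy j
  have hxj := h.2 hx j
  have hyj := mul_nonneg hb.le (sub_nonneg.2 (h.2 hy j))
  have hsum : a * (x j - w j) + b * (y j - w j) = 0 := by linear_combination hj - w j * hab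
  exact le_antisymm (by nlinarith) hxj

def coordSum (T : Finset ι) : (ι → ℝ) →ₗ[ℝ] ℝ where
  toFun x := ∑ j ∈ T, x j
  map_add' x y := sum_add_distrib
  map_smul' c x := by simp [mul_sum]

lemma coordSum_apply (T : Finset ι) (x : ι → ℝ) : coordSum T x = ∑ j ∈ T, x j := rfl

lemma coordSum_nonneg (T : Finset ι) {x : ι → ℝ} (hx : 0 ≤ x) : 0 ≤ coordSum T x :=
  sum_nonneg fun j _ => hx j

variable [Fintype ι]

lemma isCompact_inter_sum_le {P : Set (ι → ℝ)} (hP : IsClosed P) (hP0 : P ⊆ Ici 0) (c : ℝ) :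
    IsCompact (P ∩ {x | ∑ j, x j ≤ c}) :=
  (isCompact_Icc (a := 0) (b := fun _ => c)).of_isClosed_subset
    (hP.inter (isClosed_le (by fun_prop) continuous_const)) fun x ⟨hxP, hxc⟩ =>
      ⟨hP0 hxP, fun j => (single_le_sum (fun k _ => hP0 hxP k) (mem_univ j)).trans hxc⟩

lemma exists_mem_extremePoints_sum_le {P : Set (ι → ℝ)} (hP : IsClosed P) (hP0 : P ⊆ Ici 0)
    {x : ι → ℝ} (hx : x ∈ P) : ∃ e ∈ P.extremePoints ℝ, ∑ j, e j ≤ ∑ j, x j := by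
  obtain ⟨w, hwK, hwmin⟩ := (isCompact_inter_sum_le hP hP0 (∑ j, x j)).exists_isMinOn
    ⟨x, hx, show ∑ j, x j ≤ ∑ j, x j from le_rfl⟩ (f := fun y => ∑ j, y j) (by fun_prop)
  have hge : ∀ y ∈ P, ∑ j, w j ≤ coordSum univ y := fun y hy =>
    (le_total (∑ j, y j) (∑ j, x j)).elim (fun h => isMinOn_iff.1 hwmin y ⟨hy, h⟩)
      fun h => hwK.2.trans h
  have hH : IsCompact (P ∩ {y | coordSum univ y = ∑ j, w j}) :=
    (isCompact_inter_sum_le hP hP0 (∑ j, w j)).of_isClosed_subset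
      (hP.inter (isClosed_eq (by fun_prop) continuous_const)) fun y hy => ⟨hy.1, hy.2.le⟩
  obtain ⟨e, he⟩ := hH.extremePoints_nonempty ⟨w, hwK.1, rfl⟩
  exact ⟨e, (isExtreme_inter_eq_of_forall_le _ hge).extremePoints_subset_extremePoints he,
    he.1.2.trans_le hwK.2⟩

end Orthant

section Covers

open Set Finset

variable {m n : ℕ} {A : Matrix (Fin m) (Fin n) ℝ}

def IsCover (A : Matrix (Fin m) (Fin n) ℝ) (x : Fin n → ℝ) : Prop :=
  ∀ i, 1 ≤ ∑ j, A i j * x j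

/-- `Qstar A` is definitionally `convexHull ℝ (integerCovers A)`. -/
def integerCovers (A : Matrix (Fin m) (Fin n) ℝ) : Set (Fin n → ℝ) :=
  {x | (∀ j, ∃ k : ℕ, x j = k) ∧ IsCover A x}

def binaryCovers (A : Matrix (Fin m) (Fin n) ℝ) : Set (Fin n → ℝ) :=
  {x | IsBinaryVec x ∧ IsCover A x}

lemma IsBinaryMatrix.nonneg (hA : IsBinaryMatrix A) (t : Fin m) (j : Fin n) : 0 ≤ A t j := by
  rcases hA t j with h | h <;> simp [h]

lemma IsBinaryVec.sum_mul_eq {a : Fin n → ℝ} (ha : IsBinaryVec a) (x : Fin n → ℝ) :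
    ∑ j, a j * x j = ∑ j ∈ univ.filter (a · ≠ 0), x j := by
  rw [sum_filter]
  refine sum_congr rfl fun j _ => ?_
  rcases ha j with h | h <;> simp [h]

lemma ncard_setOf_ne_zero (x : Fin n → ℝ) :
    {j | x j ≠ 0}.ncard = (univ.filter (x · ≠ 0)).card := by
  rw [← Set.ncard_coe_finset]
  congr
  ext
  simp

lemma IsBinaryVec.sum_eq_ncard {x : Fin n → ℝ} (hx : IsBinaryVec x) :
    ∑ j, x j = (supp x).ncard := by
  have := hx.sum_mul_eq fun _ => 1
  simp only [mul_one, sum_const, nsmul_one] at this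
  rw [this, supp, ncard_setOf_ne_zero]

lemma IsBinaryVec.mem_integerCovers {x : Fin n → ℝ} (hx : IsBinaryVec x) (hc : IsCover A x) :
    x ∈ integerCovers A :=
  ⟨fun j => (hx j).elim (fun h => ⟨0, by simp [h]⟩) fun h => ⟨1, by simp [h]⟩, hc⟩

lemma integerCovers_subset_Ici : integerCovers A ⊆ Ici 0 := fun x hx j => by
  obtain ⟨k, hk⟩ := hx.1 j
  simp [hk]

lemma qstar_subset_Ici : Qstar A ⊆ Ici 0 :=
  convexHull_min integerCovers_subset_Ici (convex_Ici 0)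

lemma mem_integerCovers_of_integral {x : Fin n → ℝ} (hx : x ∈ polyQ A)
    (hint : ∀ j, ∃ z : ℤ, x j = z) : x ∈ integerCovers A := by
  refine ⟨fun j => ?_, hx.1⟩
  obtain ⟨z, hz⟩ := hint j
  have hz0 : (0 : ℤ) ≤ z := by exact_mod_cast hz ▸ hx.2 j
  exact ⟨z.toNat, by rw [hz]; exact_mod_cast (Int.toNat_of_nonneg hz0).symm⟩

lemma truncate_mem_binaryCovers (hA : IsBinaryMatrix A) {x : Fin n → ℝ}
    (hx : x ∈ integerCovers A) : (fun j => min (x j) 1) ∈ binaryCovers A := by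
  obtain ⟨hnat, hcov⟩ := hx
  have hone : ∀ j, x j ≠ 0 → min (x j) 1 = 1 := fun j hj => by
    obtain ⟨k, hk⟩ := hnat j
    rw [hk] at hj ⊢
    exact min_eq_right (by exact_mod_cast Nat.one_le_iff_ne_zero.2 (by exact_mod_cast hj))
  refine ⟨fun j => ?_, fun i => ?_⟩
  · by_cases hj : x j = 0
    · simp [hj]
    · exact Or.inr (hone j hj)
  · obtain ⟨j, hAj, hxj⟩ : ∃ j, A i j ≠ 0 ∧ x j ≠ 0 := by
      by_contra! h
      have : ∑ j, A i j * x j = 0 := sum_eq_zero fun j _ => by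
        by_cases hA0 : A i j = 0 <;> simp [hA0, h j]
      linarith [hcov i]
    calc (1 : ℝ) = A i j * min (x j) 1 := by rw [(hA i j).resolve_left hAj, hone j hxj, one_mul]
      _ ≤ ∑ k, A i k * min (x k) 1 :=
        single_le_sum (fun k _ => mul_nonneg (hA.nonneg i k)
          (le_min (integerCovers_subset_Ici ⟨hnat, hcov⟩ k) zero_le_one)) (mem_univ j)

lemma binaryCovers_finite (A : Matrix (Fin m) (Fin n) ℝ) : (binaryCovers A).Finite :=
  (Set.Finite.pi' fun _ => toFinite ({0, 1} : Set ℝ)).subset fun _ hx j => hx.1 j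

lemma exists_minimal_binaryCovers_le (hA : IsBinaryMatrix A) {x : Fin n → ℝ}
    (hx : x ∈ integerCovers A) : ∃ w ≤ x, Minimal (· ∈ binaryCovers A) w := by
  obtain ⟨w, hw, hmin⟩ := (binaryCovers_finite A).exists_le_minimal
    (truncate_mem_binaryCovers hA hx)
  exact ⟨w, fun j => (hw j).trans (min_le_left _ _), hmin⟩

/-- A minimal cover `w` is the least point of the face of `Q*(A)` on which every coordinate
outside `supp w` vanishes, since any integer cover on that face truncates to a cover below `w`. -/
lemma Minimal.mem_extremePoints_qstar (hA : IsBinaryMatrix A) {w : Fin n → ℝ}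
    (hw : Minimal (· ∈ binaryCovers A) w) : w ∈ (Qstar A).extremePoints ℝ := by
  classical
  set ℓ := coordSum (univ.filter (w · = 0))
  have hℓ : ∀ x ∈ Qstar A, 0 ≤ ℓ x := fun x hx => coordSum_nonneg _ (qstar_subset_Ici hx)
  have hdom : integerCovers A ∩ {x | ℓ x = 0} ⊆ Ici w := by
    rintro x ⟨hx, hℓx⟩
    have hx0 : ∀ j, w j = 0 → x j = 0 := fun j hj =>
      (sum_eq_zero_iff_of_nonneg fun k _ => integerCovers_subset_Ici hx k).1
        (show ∑ k ∈ univ.filter (w · = 0), x k = 0 from hℓx) j (by simpa using hj)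
    have hle : (fun j => min (x j) 1) ≤ w := fun j => by
      rcases hw.1.1 j with h | h
      · simp [h, hx0 j h]
      · exact h ▸ min_le_right _ _
    exact fun j => (hw.2 (truncate_mem_binaryCovers hA hx) hle j).trans (min_le_left _ _)
  have hleast : IsLeast (Qstar A ∩ {x | ℓ x = 0}) w :=
    ⟨⟨subset_convexHull ℝ _ (hw.1.1.mem_integerCovers hw.1.2),
        show ∑ j ∈ univ.filter (w · = 0), w j = 0 from
          sum_eq_zero fun j hj => (mem_filter.1 hj).2⟩,
      fun x hx => convexHull_min hdom (convex_Ici w) <|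
        convexHull_inter_eq_subset_of_forall_le ℓ (fun y hy => hℓ y (subset_convexHull ℝ _ hy)) hx⟩
  exact (isExtreme_inter_eq_of_forall_le ℓ hℓ).extremePoints_subset_extremePoints
    hleast.mem_extremePoints

end Covers

section BlockerCore

open Set Finset

variable {m n : ℕ} {A : Matrix (Fin m) (Fin n) ℝ} {B₁ : Matrix (Fin n) (Fin n) ℝ} {s : ℕ}

lemma IsBlockerCore.sum_row (hb : IsBlockerCore A B₁ s) (a : Fin n) : ∑ j, B₁ a j = s := by
  rw [(hb.2.2.1 a).1.sum_eq_ncard]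
  exact congrArg Nat.cast (hb.2.2.2.2.1 a)

lemma IsBlockerCore.eq_row_or_lt_sum (hA : IsBinaryMatrix A) (hb : IsBlockerCore A B₁ s)
    {x : Fin n → ℝ} (hx : x ∈ integerCovers A) : (∃ a, x = B₁ a) ∨ (s : ℝ) < ∑ j, x j := by
  obtain ⟨w, hwx, hw⟩ := exists_minimal_binaryCovers_le hA hx
  have hle : ∑ j, w j ≤ ∑ j, x j := sum_le_sum fun j _ => hwx j
  by_cases hrow : ∃ a, w = B₁ a
  · obtain ⟨a, rfl⟩ := hrow
    by_cases hxa : x = B₁ a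
    · exact Or.inl ⟨a, hxa⟩
    obtain ⟨j, hj⟩ := Function.ne_iff.1 hxa
    exact Or.inr (hb.sum_row a ▸
      sum_lt_sum (fun j _ => hwx j) ⟨j, mem_univ j, (hwx j).lt_of_ne (Ne.symm hj)⟩)
  · push Not at hrow
    have := hb.2.2.2.2.2.2 w hw.1.1 (hw.mem_extremePoints_qstar hA) hrow
    rw [hw.1.1.sum_eq_ncard] at hle
    exact Or.inr ((Nat.cast_lt.2 this).trans_le hle)

lemma IsBlockerCore.le_sum (hA : IsBinaryMatrix A) (hb : IsBlockerCore A B₁ s)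
    {x : Fin n → ℝ} (hx : x ∈ integerCovers A) : (s : ℝ) ≤ ∑ j, x j :=
  (hb.eq_row_or_lt_sum hA hx).elim (fun ⟨a, ha⟩ => (ha ▸ hb.sum_row a).ge) le_of_lt

lemma IsBlockerCore.exists_eq_row (hA : IsBinaryMatrix A) (hb : IsBlockerCore A B₁ s)
    {x : Fin n → ℝ} (hx : x ∈ integerCovers A) (hs : ∑ j, x j = s) : ∃ a, x = B₁ a :=
  (hb.eq_row_or_lt_sum hA hx).resolve_right hs.not_gt

lemma IsBlockerCore.isExtreme_segment_qstar (hA : IsBinaryMatrix A) (hb : IsBlockerCore A B₁ s)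
    {a b : Fin n} (hab : a ≠ b) : IsExtreme ℝ (Qstar A) (segment ℝ (B₁ a) (B₁ b)) := by
  have hge : ∀ x ∈ Qstar A, (s : ℝ) ≤ coordSum univ x := fun x hx =>
    convexHull_min (fun y hy => hb.le_sum hA hy)
      (convex_halfSpace_ge (coordSum univ).isLinear _) hx
  have hface : Qstar A ∩ {x | coordSum univ x = s} ⊆ convexHull ℝ (range B₁) :=
    (convexHull_inter_eq_subset_of_forall_le _ fun x hx => hb.le_sum hA hx).trans <|
      convexHull_mono fun x ⟨hx, hs⟩ => (hb.exists_eq_row hA hx hs).imp fun _ => Eq.symm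
  exact isExtreme_segment_of_face_subset_convexHull
    (Matrix.linearIndependent_rows_of_det_ne_zero hb.2.1) (convex_convexHull ℝ _) _ hge hface hab
    ⟨(hb.2.2.1 a).2.1, hb.sum_row a⟩ ⟨(hb.2.2.1 b).2.1, hb.sum_row b⟩

end BlockerCore

section Slice

open Set Finset

variable {m n : ℕ} {A : Matrix (Fin m) (Fin n) ℝ} {B₁ : Matrix (Fin n) (Fin n) ℝ} {s : ℕ}

lemma isClosed_polyQ (A : Matrix (Fin m) (Fin n) ℝ) : IsClosed (polyQ A) := by
  simp only [polyQ, ofPred_and, ofPred_forall]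
  exact (isClosed_iInter fun i => isClosed_le continuous_const (by fun_prop)).inter
    (isClosed_iInter fun j => isClosed_le continuous_const (continuous_apply j))

lemma convex_polyQ (A : Matrix (Fin m) (Fin n) ℝ) : Convex ℝ (polyQ A) := by
  simp only [polyQ, ofPred_and, ofPred_forall]
  exact (convex_iInter fun i =>
      convex_halfSpace_ge (LinearMap.proj i ∘ₗ A.mulVecLin).isLinear 1).inter
    (convex_iInter fun j => convex_halfSpace_ge (LinearMap.proj j).isLinear 0)

/-- The face `Q(A) ∩ {x | x i₀ = 0}` is integral, so its minimal-sum vertices are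
integer covers and the argument for `Q*(A)` carries over. -/
lemma MinimallyNonideal.isExtreme_segment_polyQ (hA : IsBinaryMatrix A)
    (hmni : MinimallyNonideal A) (hb : IsBlockerCore A B₁ s) {a b : Fin n} (hab : a ≠ b)
    {i₀ : Fin n} (ha₀ : B₁ a i₀ = 0) (hb₀ : B₁ b i₀ = 0) (ha : B₁ a ∈ polyQ A)
    (hb' : B₁ b ∈ polyQ A) : IsExtreme ℝ (polyQ A) (segment ℝ (B₁ a) (B₁ b)) := by
  let π : (Fin n → ℝ) →ₗ[ℝ] ℝ := LinearMap.proj i₀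
  set F := polyQ A ∩ {x | π x = 0}
  have hF : IsExtreme ℝ (polyQ A) F := isExtreme_inter_eq_of_forall_le π fun x hx => hx.2 i₀
  have hFc : IsClosed F :=
    (isClosed_polyQ A).inter (isClosed_eq (continuous_apply i₀) continuous_const)
  have hFconv : Convex ℝ F := (convex_polyQ A).inter (convex_hyperplane π.isLinear 0)
  have hF0 : F ⊆ Ici 0 := fun x hx => hx.1.2
  have hint : ∀ e ∈ F.extremePoints ℝ, e ∈ integerCovers A := fun e he =>
    mem_integerCovers_of_integral he.1.1 ((hmni.2 i₀).1 e he)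
  have hge : ∀ x ∈ F, (s : ℝ) ≤ coordSum univ x := fun x hx => by
    obtain ⟨e, he, hex⟩ := exists_mem_extremePoints_sum_le hFc hF0 hx
    exact (hb.le_sum hA (hint e he)).trans hex
  have hface : F ∩ {x | coordSum univ x = s} ⊆ convexHull ℝ (range B₁) := by
    refine subset_convexHull_of_extremePoints_subset
      ((isCompact_inter_sum_le hFc hF0 s).of_isClosed_subset
        (hFc.inter (isClosed_eq (by fun_prop) continuous_const)) fun x hx => ⟨hx.1, hx.2.le⟩)
      (hFconv.inter (convex_hyperplane (coordSum univ).isLinear _)) (finite_range _)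
      fun e he => ?_
    have heF := (isExtreme_inter_eq_of_forall_le _ hge).extremePoints_subset_extremePoints he
    obtain ⟨a, rfl⟩ := hb.exists_eq_row hA (hint e heF) he.1.2
    exact mem_range_self a
  exact hF.trans (isExtreme_segment_of_face_subset_convexHull
    (Matrix.linearIndependent_rows_of_det_ne_zero hb.2.1) hFconv _ hge hface hab
    ⟨⟨ha, ha₀⟩, hb.sum_row a⟩ ⟨⟨hb', hb₀⟩, hb.sum_row b⟩)

end Slice

section Core

open Set Finset

variable {m n : ℕ} {A : Matrix (Fin m) (Fin n) ℝ} {A₁ : Matrix (Fin n) (Fin n) ℝ} {r : ℕ}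

lemma IsCore.le_ncard_rowSupp (hcore : IsCore A A₁ r) (t : Fin m) :
    r ≤ (rowSupp A t).ncard := by
  obtain ⟨-, -, ⟨f, -, hfrow, hfbig⟩, hrow, -⟩ := hcore
  by_cases ht : t ∈ range f
  · obtain ⟨i, rfl⟩ := ht
    rw [rowSupp, ← hfrow i]
    exact (hrow i).ge
  · exact (hfbig t ht).le

/-- With `r = 2`, complementary covers `v, v'` are tight on every core row, so
`A₁.mulVec (v - v') = 0`. -/
lemma IsCore.eq_of_forall_add_eq_one (hA : IsBinaryMatrix A) (hcore : IsCore A A₁ r)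
    (hr : r = 2) {v v' : Fin n → ℝ} (hv : v ∈ polyQ A) (hv' : v' ∈ polyQ A)
    (h : ∀ j, v j + v' j = 1) : v = v' := by
  obtain ⟨-, hdet, ⟨f, -, hfrow, -⟩, hrow, -⟩ := hcore
  have hsum : ∀ i, ∑ j, A₁ i j * v j + ∑ j, A₁ i j * v' j = 2 := fun i => by
    have hbin : IsBinaryVec (A₁ i) := fun j => hfrow i ▸ hA (f i) j
    simp_rw [← sum_add_distrib, ← mul_add, h, mul_one]
    rw [hbin.sum_eq_ncard]
    exact_mod_cast (hrow i).trans hr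
  have hcov : ∀ x ∈ polyQ A, ∀ i, 1 ≤ ∑ j, A₁ i j * x j := fun x hx i => by
    rw [hfrow i]
    exact hx.1 (f i)
  have hker : A₁.mulVec (v - v') = 0 := funext fun i => by
    simp only [Matrix.mulVec, dotProduct, Pi.sub_apply, mul_sub, sum_sub_distrib, Pi.zero_apply]
    linarith [hsum i, hcov v hv i, hcov v' hv' i]
  exact sub_eq_zero.1 (Matrix.eq_zero_of_mulVec_eq_zero hdet hker)

lemma IsBinaryMatrix.le_sum_mul_of_half_le (hA : IsBinaryMatrix A) {z : Fin n → ℝ}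
    (hz : ∀ k, 1 / 2 ≤ z k) {t : Fin m} {j : Fin n} (hj : A t j ≠ 0) :
    z j + ((rowSupp A t).ncard - 1) / 2 ≤ ∑ k, A t k * z k := by
  rw [IsBinaryVec.sum_mul_eq (fun k => hA t k), rowSupp, ncard_setOf_ne_zero]
  have hjR : j ∈ univ.filter (A t · ≠ 0) := mem_filter.2 ⟨mem_univ j, hj⟩
  rw [← add_sum_erase _ _ hjR]
  have := card_nsmul_le_sum ((univ.filter (A t · ≠ 0)).erase j) z _ fun k _ => hz k
  rw [card_erase_of_mem hjR, nsmul_eq_mul, Nat.cast_sub (card_pos.2 ⟨j, hjR⟩)] at this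
  push_cast at this
  linarith

lemma add_sub_single_mem_polyQ (hA : IsBinaryMatrix A) {z : Fin n → ℝ} (hz : z ∈ polyQ A)
    {j : Fin n} (hzj : 1 / 2 ≤ z j) (hrow : ∀ t, A t j ≠ 0 → 3 / 2 ≤ ∑ k, A t k * z k) :
    z + Pi.single j (1 / 2) ∈ polyQ A ∧ z - Pi.single j (1 / 2) ∈ polyQ A := by
  have hsum : ∀ t (c : ℝ),
      ∑ k, A t k * (z + Pi.single j c : Fin n → ℝ) k = ∑ k, A t k * z k + A t j * c :=
    fun t c => by simp [mul_add, sum_add_distrib, Pi.single_apply]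
  have hcoord : ∀ k (c : ℝ), (z + Pi.single j c : Fin n → ℝ) k = z k + if k = j then c else 0 :=
    fun k c => by simp [Pi.single_apply]
  rw [sub_eq_add_neg, ← Pi.single_neg]
  refine ⟨⟨fun t => ?_, fun k => ?_⟩, ⟨fun t => ?_, fun k => ?_⟩⟩
  · rw [hsum]
    linarith [hz.1 t, mul_nonneg (hA.nonneg t j) (by norm_num : (0 : ℝ) ≤ 1 / 2)]
  · rw [hcoord]
    split_ifs <;> linarith [hz.2 k]
  · rw [hsum]
    rcases hA t j with h | h
    · simp [h, hz.1 t]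
    · linarith [hrow t (by simp [h])]
  · rw [hcoord]
    split_ifs with h
    · subst h; linarith
    · linarith [hz.2 k]

lemma IsCore.not_isExtreme_segment_of_union_eq_univ (hA : IsBinaryMatrix A)
    (hcore : IsCore A A₁ r) {v v' : Fin n → ℝ} (hne : v ≠ v') (hbv : IsBinaryVec v)
    (hbv' : IsBinaryVec v') (hv : v ∈ polyQ A) (hv' : v' ∈ polyQ A)
    (hsum : ∑ j, v j = ∑ j, v' j) (hU : supp v ∪ supp v' = univ) :
    ¬ IsExtreme ℝ (polyQ A) (segment ℝ v v') := by
  set z : Fin n → ℝ := (1 / 2 : ℝ) • v + (1 / 2 : ℝ) • v'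
  have hzseg : z ∈ segment ℝ v v' := ⟨1 / 2, 1 / 2, by norm_num, by norm_num, by norm_num, rfl⟩
  have hz : ∀ k, z k = (v k + v' k) / 2 := fun k => by simp [z]; ring
  have hcover : ∀ k, 1 ≤ v k + v' k := fun k => by
    rcases (hU ▸ mem_univ k : k ∈ supp v ∪ supp v') with hk | hk
    · linarith [(hbv k).resolve_left hk, hv'.2 k]
    · linarith [(hbv' k).resolve_left hk, hv.2 k]
  have hhalf : ∀ k, 1 / 2 ≤ z k := fun k => by rw [hz]; linarith [hcover k]
  obtain ⟨j, hj⟩ : ∃ j, ∀ t, A t j ≠ 0 → 3 / 2 ≤ ∑ k, A t k * z k := by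
    by_cases hcommon : ∃ j, v j = 1 ∧ v' j = 1
    · obtain ⟨j, h, h'⟩ := hcommon
      refine ⟨j, fun t ht => ?_⟩
      have := hA.le_sum_mul_of_half_le hhalf ht
      have h2 : (2 : ℝ) ≤ (rowSupp A t).ncard := by
        exact_mod_cast hcore.1.trans (hcore.le_ncard_rowSupp t)
      rw [hz, h, h'] at this
      linarith
    · have hcompl : ∀ k, v k + v' k = 1 := fun k => by
        rcases hbv k with h | h <;> rcases hbv' k with h' | h'
        · linarith [hcover k]
        · rw [h, h']; norm_num
        · rw [h, h']; norm_num
        · exact absurd ⟨k, h, h'⟩ hcommon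
      rcases hcore.1.eq_or_lt with hr | hr
      · exact absurd (hcore.eq_of_forall_add_eq_one hA hr.symm hv hv' hcompl) hne
      obtain ⟨j, -⟩ := Function.ne_iff.1 hne
      refine ⟨j, fun t ht => ?_⟩
      have := hA.le_sum_mul_of_half_le hhalf ht
      have h3 : (3 : ℝ) ≤ (rowSupp A t).ncard := by
        exact_mod_cast hr.trans_le (hcore.le_ncard_rowSupp t)
      rw [hz, hcompl] at this
      linarith
  obtain ⟨hadd, hsub⟩ :=
    add_sub_single_mem_polyQ hA ((convex_polyQ A).segment_subset hv hv' hzseg) (hhalf j) hj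
  exact not_isExtreme_segment_of_add_sub_mem (coordSum univ) hsum hzseg
    (by simp [coordSum_apply]) hadd hsub

end Core

theorem stmt19_general {m n : ℕ} (A : Matrix (Fin m) (Fin n) ℝ) (hA : IsBinaryMatrix A)
    (hmni : MinimallyNonideal A)
    (A₁ B₁ : Matrix (Fin n) (Fin n) ℝ) (r s : ℕ)
    (hcore : IsCore A A₁ r) (hbcore : IsBlockerCore A B₁ s)
    (v v' : Fin n → ℝ) (hne : v ≠ v')
    (hbv : IsBinaryVec v) (hbv' : IsBinaryVec v')
    (hv : IsVertex (polyQ A) v) (hv' : IsVertex (polyQ A) v')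
    (hsv : ∑ j, v j = (s : ℝ)) (hsv' : ∑ j, v' j = (s : ℝ)) :
    AdjacentVerts (Qstar A) v v' ∧
      (AdjacentVerts (polyQ A) v v' ↔ supp v ∪ supp v' ≠ (Set.univ : Set (Fin n))) := by
  obtain ⟨a, rfl⟩ := hbcore.exists_eq_row hA (hbv.mem_integerCovers hv.1.1) hsv
  obtain ⟨b, rfl⟩ := hbcore.exists_eq_row hA (hbv'.mem_integerCovers hv'.1.1) hsv'
  have hab : a ≠ b := fun h => hne (h ▸ rfl)
  refine ⟨⟨hne, (hbcore.2.2.1 a).2, (hbcore.2.2.1 b).2, hbcore.isExtreme_segment_qstar hA hab⟩,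
    fun hadj hU => hcore.not_isExtreme_segment_of_union_eq_univ hA hne hbv hbv' hv.1 hv'.1
      (hsv.trans hsv'.symm) hU hadj.2.2.2, fun hU => ⟨hne, hv, hv', ?_⟩⟩
  obtain ⟨i₀, hi₀⟩ := (Set.ne_univ_iff_exists_notMem _).1 hU
  exact hmni.isExtreme_segment_polyQ hA hbcore hab (not_not.1 fun h => hi₀ (Or.inl h))
    (not_not.1 fun h => hi₀ (Or.inr h)) hv.1 hv'.1

/-- for a minimally nonideal matrix `A` (not a degenerate projective
plane) with core `A₁` (`r` ones per row) and blocker core `B₁` (`s` ones per row),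
binary vertices of `Q(A)` with exactly `s` ones are always adjacent in `Q*(A)`, and are
adjacent in `Q(A)` iff their supports do not cover all coordinates. -/
theorem stmt19 {m n : ℕ} (A : Matrix (Fin m) (Fin n) ℝ) (hA : IsBinaryMatrix A)
    (hmni : MinimallyNonideal A) (hiso : ¬ IsoToDegenProjPlane A)
    (A₁ B₁ : Matrix (Fin n) (Fin n) ℝ) (r s : ℕ)
    (hcore : IsCore A A₁ r) (hbcore : IsBlockerCore A B₁ s)
    (v v' : Fin n → ℝ) (hne : v ≠ v')
    (hbv : IsBinaryVec v) (hbv' : IsBinaryVec v')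
    (hv : IsVertex (polyQ A) v) (hv' : IsVertex (polyQ A) v')
    (hsv : ∑ j, v j = (s : ℝ)) (hsv' : ∑ j, v' j = (s : ℝ)) :
    AdjacentVerts (Qstar A) v v' ∧
      (AdjacentVerts (polyQ A) v v' ↔ supp v ∪ supp v' ≠ (Set.univ : Set (Fin n))) :=
  stmt19_general A hA hmni A₁ B₁ r s hcore hbcore v v' hne hbv hbv' hv hv' hsv hsv'
end
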